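/- Let s ∈ (0,1), n ≥ 1, r > 0, and for δ > 0 consider the integral I(δ) = ∫_{B_r((r+δ)e₁)} |w|^{−(n+2s)} dw. Then δ^{2s} · I(δ) converges, as δ → 0⁺, to ∫_{{ξ₁ > 1}} |ξ|^{−(n+2s)} dξ, which is a finite positive constant. Consequently there exist c > 0 and δ₀ > 0 such that I(δ) ≥ c · δ^{−2s} for all δ ∈ (0, δ₀). -/

import Mathlib

/-!
After the substitution `w = δ ξ`, the kernel `‖w‖ ^ (-(n + 2s))` being homogeneous, `δ ^ (2s) I(δ)`
is the integral of the same kernel over the ball of radius `R = r / δ` centred at `(R + 1) e₁`.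
These balls are all tangent to the hyperplane `ξ₁ = 1` at `e₁`, increase with `R` and exhaust
the open half-space `ξ₁ > 1`. The kernel is integrable there because `n + 2s > n` and the
half-space avoids the unit ball, so monotone convergence of set integrals gives the limit,
which is positive since the half-space is open. A positive limit of `δ ^ (2s) I(δ)` yields the
lower bound.
-/

open MeasureTheory Metric Set Filter
open scoped RealInnerProductSpace Topology Pointwise

section HalfSpace

variable {E : Type*} [NormedAddCommGroup E] [InnerProductSpace ℝ E] {u : E}

theorem one_lt_norm_of_one_lt_inner (hu : ‖u‖ = 1) {x : E} (hx : 1 < ⟪u, x⟫) : 1 < ‖x‖ :=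
  hx.trans_le <| by simpa [hu] using real_inner_le_norm u x

theorem ball_add_one_smul_subset_halfSpace (hu : ‖u‖ = 1) (R : ℝ) :
    ball ((R + 1) • u) R ⊆ {x | 1 < ⟪u, x⟫} := by
  intro x hx
  rw [mem_ball, dist_eq_norm] at hx
  have hdecomp : ⟪u, x⟫ = (R + 1) + ⟪u, x - (R + 1) • u⟫ := by
    simp [inner_sub_right, real_inner_smul_right, hu]
  have hCS : ⟪u, x - (R + 1) • u⟫ ≥ -‖x - (R + 1) • u‖ := by
    simpa [hu] using neg_le_of_abs_le (abs_real_inner_le_norm u (x - (R + 1) • u))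
  simp only [mem_ofPred_eq]
  linarith

theorem ball_add_one_smul_mono (hu : ‖u‖ = 1) :
    Monotone fun R : ℝ => ball ((R + 1) • u) R := by
  intro R R' hRR'
  refine ball_subset_ball' ?_
  rw [dist_eq_norm, ← sub_smul, norm_smul, hu, Real.norm_eq_abs, abs_of_nonpos (by linarith)]
  linarith

/-- Points of the open half-space lie in the tangent balls of large radius, since
`‖x - (R + 1) u‖² - R² = ‖x‖² + 1 - 2⟪u, x⟫ - 2R (⟪u, x⟫ - 1)`. -/
theorem iUnion_ball_add_one_smul (hu : ‖u‖ = 1) :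
    ⋃ R : ℝ, ball ((R + 1) • u) R = {x | 1 < ⟪u, x⟫} := by
  refine (iUnion_subset (ball_add_one_smul_subset_halfSpace hu)).antisymm fun x hx => ?_
  simp only [mem_ofPred_eq] at hx
  set t := ⟪u, x⟫
  set R := (‖x‖ ^ 2 + 1) / (2 * (t - 1))
  have hR : 0 ≤ R := by positivity
  have hRt : 2 * R * (t - 1) = ‖x‖ ^ 2 + 1 := by
    simp only [R]; field_simp [(sub_pos.2 hx).ne']
  have hsq : ‖x - (R + 1) • u‖ ^ 2 < R ^ 2 := by
    rw [norm_sub_sq_real, real_inner_smul_right, real_inner_comm, norm_smul, hu, Real.norm_eq_abs,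
      abs_of_nonneg (by linarith)]
    nlinarith
  exact mem_iUnion.2 ⟨R, by
    rw [mem_ball, dist_eq_norm]; exact lt_of_pow_lt_pow_left₀ 2 hR hsq⟩

variable [MeasurableSpace E] [OpensMeasurableSpace E]

theorem tendsto_setIntegral_ball_add_one_smul (hu : ‖u‖ = 1) {μ : Measure E} {f : E → ℝ}
    (hf : IntegrableOn f {x | 1 < ⟪u, x⟫} μ) :
    Tendsto (fun R : ℝ => ∫ x in ball ((R + 1) • u) R, f x ∂μ) atTop
      (𝓝 (∫ x in {x | 1 < ⟪u, x⟫}, f x ∂μ)) := by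
  rw [← iUnion_ball_add_one_smul hu] at hf ⊢
  exact tendsto_setIntegral_of_monotone (fun _ => measurableSet_ball)
    (ball_add_one_smul_mono hu) hf

end HalfSpace

section NormRpow

variable {E : Type*} [NormedAddCommGroup E] [NormedSpace ℝ E] [FiniteDimensional ℝ E]
  [MeasurableSpace E] [BorelSpace E] (μ : Measure E) [μ.IsAddHaarMeasure]

theorem integrableOn_norm_rpow_neg_compl_closedBall {p : ℝ}
    (hp : (Module.finrank ℝ E : ℝ) < p) :
    IntegrableOn (fun x : E => ‖x‖ ^ (-p)) (closedBall 0 1)ᶜ μ := by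
  have hp0 : 0 < p := (Nat.cast_nonneg _).trans_lt hp
  refine (((integrable_one_add_norm hp).const_mul (2 ^ p)).integrableOn).mono'
    (measurable_norm.pow_const _).aestronglyMeasurable
    ((ae_restrict_iff' measurableSet_closedBall.compl).2 ?_)
  refine Eventually.of_forall fun x hx => ?_
  have hx1 : 1 < ‖x‖ := by simpa using hx
  have hhalf : ((1 + ‖x‖) / 2) ^ (-p) = 2 ^ p * (1 + ‖x‖) ^ (-p) := by
    rw [Real.div_rpow (by positivity) zero_le_two, Real.rpow_neg zero_le_two, div_inv_eq_mul,
      mul_comm]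
  rw [Real.norm_of_nonneg (by positivity), ← hhalf]
  exact Real.rpow_le_rpow_of_nonpos (by positivity) (by linarith) (by linarith)

theorem setIntegral_smul_set_norm_rpow_neg {δ : ℝ} (hδ : 0 < δ) (p : ℝ) (s : Set E) :
    ∫ x in δ • s, ‖x‖ ^ (-p) ∂μ =
      δ ^ ((Module.finrank ℝ E : ℝ) - p) * ∫ x in s, ‖x‖ ^ (-p) ∂μ := by
  have h := Measure.setIntegral_comp_smul_of_pos μ (fun x : E => ‖x‖ ^ (-p)) s hδ
  simp only [norm_smul, Real.norm_of_nonneg hδ.le, Real.mul_rpow hδ.le (norm_nonneg _),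
    integral_const_mul, smul_eq_mul] at h
  rw [Real.rpow_sub hδ, Real.rpow_natCast, div_eq_mul_inv, ← Real.rpow_neg hδ.le, mul_assoc, h,
    ← mul_assoc, mul_inv_cancel₀ (pow_pos hδ _).ne', one_mul]

theorem rpow_mul_setIntegral_ball_add_smul {δ : ℝ} (hδ : 0 < δ) (a r : ℝ) (u : E) :
    δ ^ a * ∫ x in ball ((r + δ) • u) r, ‖x‖ ^ (-((Module.finrank ℝ E : ℝ) + a)) ∂μ =
      ∫ x in ball ((r / δ + 1) • u) (r / δ), ‖x‖ ^ (-((Module.finrank ℝ E : ℝ) + a)) ∂μ := by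
  have hball : ball ((r + δ) • u) r = δ • ball ((r / δ + 1) • u) (r / δ) := by
    rw [_root_.smul_ball hδ.ne', smul_smul, Real.norm_of_nonneg hδ.le]
    congr 2 <;> field_simp
  have hexp : a + ((Module.finrank ℝ E : ℝ) - (Module.finrank ℝ E + a)) = 0 := by ring
  rw [hball, setIntegral_smul_set_norm_rpow_neg μ hδ, ← mul_assoc, ← Real.rpow_add hδ, hexp,
    Real.rpow_zero, one_mul]

end NormRpow

theorem exists_const_mul_rpow_neg_le_of_tendsto {g : ℝ → ℝ} {a L : ℝ}
    (h : Tendsto (fun δ => δ ^ a * g δ) (𝓝[>] 0) (𝓝 L)) (hL : 0 < L) :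
    ∃ c > 0, ∃ δ₀ > 0, ∀ δ ∈ Ioo 0 δ₀, c * δ ^ (-a) ≤ g δ := by
  obtain ⟨δ₀, hδ₀, hsub⟩ := mem_nhdsGT_iff_exists_Ioo_subset.1
    ((h.eventually (eventually_gt_nhds (half_lt_self hL))).and self_mem_nhdsWithin)
  refine ⟨L / 2, half_pos hL, δ₀, hδ₀, fun δ hδ => ?_⟩
  obtain ⟨hlt, hδpos⟩ := hsub hδ
  have hδa : 0 < δ ^ a := Real.rpow_pos_of_pos hδpos a
  rw [Real.rpow_neg hδpos.le, ← div_eq_mul_inv, div_le_iff₀ hδa, mul_comm]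
  exact hlt.le

theorem IsOpen.setIntegral_pos {X : Type*} [TopologicalSpace X] [MeasurableSpace X]
    [OpensMeasurableSpace X] {μ : Measure X} [μ.IsOpenPosMeasure] {U : Set X} {f : X → ℝ}
    (hU : IsOpen U) (hne : U.Nonempty) (hf : IntegrableOn f U μ) (hpos : ∀ x ∈ U, 0 < f x) :
    0 < ∫ x in U, f x ∂μ := by
  rw [setIntegral_pos_iff_support_of_nonneg_ae
    ((ae_restrict_iff' hU.measurableSet).2 (Eventually.of_forall fun x hx => (hpos x hx).le)) hf]
  exact (hU.measure_pos μ hne).trans_le (measure_mono fun x hx => ⟨(hpos x hx).ne', hx⟩)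

theorem stmt4 {n : ℕ} (hn : 0 < n) (s : ℝ) (hs : s ∈ Set.Ioo (0:ℝ) 1)
    (r : ℝ) (hr : 0 < r)
    (I : ℝ → ℝ)
    (hI : ∀ δ : ℝ, I δ =
      ∫ w in Metric.ball ((r + δ) • EuclideanSpace.single (⟨0, hn⟩ : Fin n) (1:ℝ)) r,
        ‖w‖ ^ (-((n : ℝ) + 2*s))) :
    Filter.Tendsto (fun δ : ℝ => δ ^ (2*s) * I δ) (nhdsWithin 0 (Set.Ioi 0))
      (nhds (∫ ξ in {ξ : EuclideanSpace ℝ (Fin n) | 1 < ξ ⟨0, hn⟩},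
        ‖ξ‖ ^ (-((n : ℝ) + 2*s)))) ∧
    (0 < ∫ ξ in {ξ : EuclideanSpace ℝ (Fin n) | 1 < ξ ⟨0, hn⟩},
        ‖ξ‖ ^ (-((n : ℝ) + 2*s))) ∧
    MeasureTheory.IntegrableOn
      (fun ξ : EuclideanSpace ℝ (Fin n) => ‖ξ‖ ^ (-((n : ℝ) + 2*s)))
      {ξ : EuclideanSpace ℝ (Fin n) | 1 < ξ ⟨0, hn⟩} ∧
    ∃ c > 0, ∃ δ₀ > 0, ∀ δ ∈ Set.Ioo (0:ℝ) δ₀, c * δ ^ (-(2*s)) ≤ I δ := by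
  set u := EuclideanSpace.single (⟨0, hn⟩ : Fin n) (1 : ℝ)
  have hu : ‖u‖ = 1 := by simp [u]
  have hH : {ξ : EuclideanSpace ℝ (Fin n) | 1 < ξ ⟨0, hn⟩} = {ξ | 1 < ⟪u, ξ⟫} := by
    ext ξ; simp [u, EuclideanSpace.inner_single_left]
  have hd : (Module.finrank ℝ (EuclideanSpace ℝ (Fin n)) : ℝ) = n := by simp
  have hp : (Module.finrank ℝ (EuclideanSpace ℝ (Fin n)) : ℝ) < n + 2 * s := by
    simp [hs.1]
  have hint : IntegrableOn (fun ξ => ‖ξ‖ ^ (-((n : ℝ) + 2 * s))) {ξ | 1 < ⟪u, ξ⟫} :=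
    (integrableOn_norm_rpow_neg_compl_closedBall volume hp).mono_set fun ξ hξ => by
      simpa using one_lt_norm_of_one_lt_inner hu hξ
  have hpos : 0 < ∫ ξ in {ξ | 1 < ⟪u, ξ⟫}, ‖ξ‖ ^ (-((n : ℝ) + 2 * s)) :=
    (isOpen_lt continuous_const (continuous_const.inner continuous_id)).setIntegral_pos
      ⟨(2 : ℝ) • u, by simp [real_inner_smul_right, hu]⟩ hint fun ξ hξ =>
        Real.rpow_pos_of_pos (one_pos.trans (one_lt_norm_of_one_lt_inner hu hξ)) _
  have hscale : ∀ δ > 0, δ ^ (2 * s) * I δ =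
      ∫ ξ in ball ((r / δ + 1) • u) (r / δ), ‖ξ‖ ^ (-((n : ℝ) + 2 * s)) := fun δ hδ => by
    simpa only [hd, ← hI] using rpow_mul_setIntegral_ball_add_smul volume hδ (2 * s) r u
  have hlim : Tendsto (fun δ => δ ^ (2 * s) * I δ) (𝓝[>] 0)
      (𝓝 (∫ ξ in {ξ | 1 < ⟪u, ξ⟫}, ‖ξ‖ ^ (-((n : ℝ) + 2 * s)))) := by
    refine ((tendsto_setIntegral_ball_add_one_smul hu hint).comp ?_).congr'
      (eventually_nhdsWithin_of_forall fun δ hδ => (hscale δ hδ).symm)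
    exact (tendsto_inv_nhdsGT_zero.const_mul_atTop hr).congr fun δ => (div_eq_mul_inv r δ).symm
  rw [hH]
  exact ⟨hlim, hpos, hint, exists_const_mul_rpow_neg_le_of_tendsto hlim hpos⟩
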